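/- Let α and β be convolution-invertible two-cocycles on a Hopf algebra H that are cohomologous via a convolution-invertible linear form λ, i.e., β(x,y) = λ(x₁)λ(y₁)α(x₂,y₂)λ⁻¹(x₃y₃) for all x,y ∈ H. Then the map x ↦ λ⁻¹(x₁)x₂ is an isomorphism of right H-comodule algebras from ᵅH to ᵝH. -/

import Mathlib

/-!
Write `φ ⇀ m` for `x ↦ φ(x₁) m(x₂)`, the convolution `(algebraMap ∘ φ) * m` in Mathlib's
convolution algebra `WithConv (C →ₗ[k] A)`; thus `f = λ⁻¹ ⇀ id` and the product of `ᵅH` is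
`α ⇀ μ`.
Associativity of convolution gives `φ ⇀ (ψ ⇀ m) = (φ * ψ) ⇀ m`, so `λ ⇀ id` inverts `f`.
As `μ` is a coalgebra map, `f ∘ (α ⇀ μ) = (α * (λ⁻¹ ∘ μ)) ⇀ μ`, while
`(β ⇀ μ) ∘ (f ⊗ f) = ((λ⁻¹ ⊗ λ⁻¹) * β) ⇀ μ`; since `λ⁻¹ ⊗ λ⁻¹` is the convolution inverse of
`λ ⊗ λ`, the cohomology relation says precisely that these two forms agree. Colinearity of `f`
is coassociativity, and the unit statement is the cohomology relation evaluated at `1 ⊗ 1`.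
-/

open TensorProduct

noncomputable section

variable (k : Type) [Field k]

/-- Convolution product of two linear maps from a coalgebra to an algebra. -/
def conv {C A : Type} [AddCommGroup C] [Module k C] [Coalgebra k C]
    [Ring A] [Algebra k A] (f g : C →ₗ[k] A) : C →ₗ[k] A :=
  LinearMap.mul' k A ∘ₗ TensorProduct.map f g ∘ₗ Coalgebra.comul

/-- Unit of the convolution algebra: `unit ∘ counit`. -/
def convOne {C A : Type} [AddCommGroup C] [Module k C] [Coalgebra k C]
    [Ring A] [Algebra k A] : C →ₗ[k] A :=
  Algebra.linearMap k A ∘ₗ Coalgebra.counit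

variable {H : Type} [Ring H] [HopfAlgebra k H]

/-- The two-cocycle condition `β(x₁,y₁) β(x₂y₂,z) = β(y₁,z₁) β(x,y₂z₂)`, as an equality
of linear maps on `(H ⊗ H) ⊗ H`. -/
def IsCocycle {A : Type} [CommRing A] [Algebra k A] (β : H ⊗[k] H →ₗ[k] A) : Prop :=
  conv k (LinearMap.mul' k A ∘ₗ TensorProduct.map β (convOne k))
      (β ∘ₗ TensorProduct.map (LinearMap.mul' k H) LinearMap.id)
  = conv k
      (LinearMap.mul' k A ∘ₗ TensorProduct.map (convOne k) β
        ∘ₗ (TensorProduct.assoc k H H H).toLinearMap)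
      (β ∘ₗ TensorProduct.map LinearMap.id (LinearMap.mul' k H)
        ∘ₗ (TensorProduct.assoc k H H H).toLinearMap)

/-- `β` and `βinv` are mutually convolution-inverse bilinear forms. -/
def IsConvInverse (β βinv : H ⊗[k] H →ₗ[k] k) : Prop :=
  conv k β βinv = convOne k ∧ conv k βinv β = convOne k

/-- The multiplication `x ⊗ y ↦ α(x₁,y₁) x₂y₂` of the twisted algebra `ᵅH`. -/
def twMul (α : H ⊗[k] H →ₗ[k] k) : H ⊗[k] H →ₗ[k] H :=
  conv k (Algebra.linearMap k H ∘ₗ α) (LinearMap.mul' k H)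

open WithConv

section Convolution

variable {C D A B : Type}
  [AddCommGroup C] [Module k C] [Coalgebra k C] [AddCommGroup D] [Module k D] [Coalgebra k D]
  [Ring A] [Algebra k A] [Ring B] [Algebra k B]

lemma conv_eq_ofConv_mul (f g : C →ₗ[k] A) : conv k f g = (toConv f * toConv g).ofConv := rfl

lemma conv_assoc (f g h : C →ₗ[k] A) : conv k (conv k f g) h = conv k f (conv k g h) :=
  congrArg ofConv (mul_assoc (toConv f) (toConv g) (toConv h))

lemma convOne_conv (f : C →ₗ[k] A) : conv k (convOne k) f = f :=
  congrArg ofConv (one_mul (toConv f))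

lemma algebraMap_comp_conv (φ ψ : C →ₗ[k] k) :
    Algebra.linearMap k A ∘ₗ conv k φ ψ
      = conv k (Algebra.linearMap k A ∘ₗ φ) (Algebra.linearMap k A ∘ₗ ψ) :=
  LinearMap.algHom_comp_convMul_distrib (Algebra.ofId k A) (toConv φ) (toConv ψ)

lemma algebraMap_comp_convOne :
    Algebra.linearMap k A ∘ₗ convOne k (C := C) (A := k) = convOne k := rfl

open Coalgebra in
lemma comp_conv_algebraMap_comp (T : A →ₗ[k] B) (φ : C →ₗ[k] k) (m : C →ₗ[k] A) :
    T ∘ₗ conv k (Algebra.linearMap k A ∘ₗ φ) m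
      = conv k (Algebra.linearMap k B ∘ₗ φ) (T ∘ₗ m) := by
  ext x
  simp [conv_eq_ofConv_mul, (ℛ k x).convMul_apply, ← Algebra.smul_def]

lemma map_conv_algebraMap_comp (φ : C →ₗ[k] k) (ψ : D →ₗ[k] k) (m : C →ₗ[k] A)
    (n : D →ₗ[k] B) :
    TensorProduct.map (conv k (Algebra.linearMap k A ∘ₗ φ) m)
        (conv k (Algebra.linearMap k B ∘ₗ ψ) n)
      = conv k
          (Algebra.linearMap k (A ⊗[k] B) ∘ₗ LinearMap.mul' k k ∘ₗ
            TensorProduct.map φ ψ)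
          (TensorProduct.map m n) := by
  rw [conv_eq_ofConv_mul, conv_eq_ofConv_mul, ← ofConv_toConv (TensorProduct.map _ _),
    ← TensorProduct.map_convMul_map]
  congr 3
  ext x y
  simp [Algebra.algebraMap_eq_smul_one, Algebra.TensorProduct.one_def, TensorProduct.smul_tmul',
    mul_smul, smul_comm (ψ y)]

lemma mul'_map_conv (φ φ' : C →ₗ[k] k) (ψ ψ' : D →ₗ[k] k) :
    conv k (LinearMap.mul' k k ∘ₗ TensorProduct.map φ ψ)
        (LinearMap.mul' k k ∘ₗ TensorProduct.map φ' ψ')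
      = LinearMap.mul' k k ∘ₗ TensorProduct.map (conv k φ φ') (conv k ψ ψ') := by
  have h := LinearMap.algHom_comp_convMul_distrib (Algebra.TensorProduct.lmul' k)
    (toConv (TensorProduct.map φ ψ)) (toConv (TensorProduct.map φ' ψ'))
  rw [TensorProduct.map_convMul_map] at h
  exact h.symm

lemma mul'_map_convOne :
    LinearMap.mul' k k ∘ₗ TensorProduct.map (convOne k (C := C)) (convOne k (C := D))
      = convOne k := by
  ext x y
  simp [convOne, mul_comm]

lemma conv_mul'_map_eq_of_eq_conv
    {lam lamInv : C →ₗ[k] k} (hlam : conv k lamInv lam = convOne k)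
    (α β ρ : C ⊗[k] C →ₗ[k] k)
    (h : β = conv k (conv k (LinearMap.mul' k k ∘ₗ TensorProduct.map lam lam) α) ρ) :
    conv k (LinearMap.mul' k k ∘ₗ TensorProduct.map lamInv lamInv) β = conv k α ρ := by
  rw [h, ← conv_assoc, ← conv_assoc, mul'_map_conv, hlam, mul'_map_convOne, convOne_conv]

end Convolution

section AlgebraCoalgebra

variable {E : Type} [Ring E] [Algebra k E] [Coalgebra k E]

lemma map_conv_algebraMap_id_comp_comul (φ : E →ₗ[k] k) :
    TensorProduct.map (conv k (Algebra.linearMap k E ∘ₗ φ) LinearMap.id) LinearMap.id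
        ∘ₗ Coalgebra.comul
      = conv k (Algebra.linearMap k (E ⊗[k] E) ∘ₗ φ) Coalgebra.comul := by
  set ν :=
    LinearMap.mul' k E ∘ₗ TensorProduct.map (Algebra.linearMap k E ∘ₗ φ) LinearMap.id
  have hν : ν.rTensor E ∘ₗ (TensorProduct.assoc k E E E).symm.toLinearMap
      = LinearMap.mul' k (E ⊗[k] E) ∘ₗ
          TensorProduct.map (Algebra.linearMap k (E ⊗[k] E) ∘ₗ φ) LinearMap.id := by
    ext a b c
    simp [ν, Algebra.algebraMap_eq_smul_one, TensorProduct.smul_tmul']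
  calc _ = ν.rTensor E ∘ₗ Coalgebra.comul.rTensor E ∘ₗ Coalgebra.comul := by
        rw [← LinearMap.comp_assoc, ← LinearMap.rTensor_comp]; rfl
    _ = ν.rTensor E ∘ₗ (TensorProduct.assoc k E E E).symm.toLinearMap
          ∘ₗ Coalgebra.comul.lTensor E ∘ₗ Coalgebra.comul := by
        rw [Coalgebra.coassoc_symm]
    _ = _ := by
        rw [← LinearMap.comp_assoc, hν, conv, LinearMap.comp_assoc,
          ← LinearMap.comp_assoc Coalgebra.comul,
          LinearMap.map_comp_lTensor, LinearMap.id_comp]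

lemma conv_algebraMap_id_comp (φ ψ : E →ₗ[k] k) :
    conv k (Algebra.linearMap k E ∘ₗ φ) LinearMap.id
        ∘ₗ conv k (Algebra.linearMap k E ∘ₗ ψ) LinearMap.id
      = conv k (Algebra.linearMap k E ∘ₗ conv k ψ φ) LinearMap.id := by
  rw [comp_conv_algebraMap_comp, LinearMap.comp_id, ← conv_assoc, algebraMap_comp_conv]

lemma conv_algebraMap_id_bijective {φ ψ : E →ₗ[k] k} (hφψ : conv k φ ψ = convOne k)
    (hψφ : conv k ψ φ = convOne k) :
    Function.Bijective (conv k (Algebra.linearMap k E ∘ₗ φ) LinearMap.id) := by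
  have hinv {φ ψ : E →ₗ[k] k} (h : conv k ψ φ = convOne k) :
      conv k (Algebra.linearMap k E ∘ₗ φ) LinearMap.id ∘ₗ
        conv k (Algebra.linearMap k E ∘ₗ ψ) LinearMap.id = LinearMap.id := by
    rw [conv_algebraMap_id_comp, h, algebraMap_comp_convOne, convOne_conv]
  exact Function.bijective_iff_has_inverse.mpr ⟨_, fun x => LinearMap.congr_fun (hinv hφψ) x,
    fun x => LinearMap.congr_fun (hinv hψφ) x⟩

lemma comul_comp_conv_algebraMap_id (φ : E →ₗ[k] k) :
    Coalgebra.comul ∘ₗ conv k (Algebra.linearMap k E ∘ₗ φ) LinearMap.id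
      = TensorProduct.map (conv k (Algebra.linearMap k E ∘ₗ φ) LinearMap.id) LinearMap.id
        ∘ₗ Coalgebra.comul := by
  rw [comp_conv_algebraMap_comp, map_conv_algebraMap_id_comp_comul, LinearMap.comp_id]

end AlgebraCoalgebra

section Bialgebra

variable {A E : Type} [Ring A] [Algebra k A] [Ring E] [Bialgebra k E]

lemma conv_apply_one (f g : E →ₗ[k] A) : conv k f g 1 = f 1 * g 1 := by
  simp [conv, Algebra.TensorProduct.one_def]

lemma conv_comp_mul' (f g : E →ₗ[k] A) :
    conv k f g ∘ₗ LinearMap.mul' k E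
      = conv k (f ∘ₗ LinearMap.mul' k E) (g ∘ₗ LinearMap.mul' k E) :=
  LinearMap.convMul_comp_coalgHom_distrib (toConv f) (toConv g) (Bialgebra.mulCoalgHom k E)

lemma inv_apply_one_tmul_one_of_eq_conv {lam lamInv : E →ₗ[k] k}
    (hlam : conv k lam lamInv = convOne k)
    (α β : E ⊗[k] E →ₗ[k] k)
    (h : β = conv k (conv k (LinearMap.mul' k k ∘ₗ TensorProduct.map lam lam) α)
      (lamInv ∘ₗ LinearMap.mul' k E)) :
    (β (1 ⊗ₜ 1))⁻¹ = lamInv 1 * (α (1 ⊗ₜ 1))⁻¹ := by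
  have hlam1 : lam 1 * lamInv 1 = 1 := by
    simpa [conv_apply_one, convOne] using LinearMap.congr_fun hlam 1
  have hβ1 : β (1 ⊗ₜ 1) = lam 1 * α (1 ⊗ₜ 1) := by
    rw [← Algebra.TensorProduct.one_def, h, conv_apply_one, conv_apply_one]
    simp only [LinearMap.comp_apply, Algebra.TensorProduct.one_def, TensorProduct.map_tmul,
      LinearMap.mul'_apply, mul_one]
    linear_combination (lam 1 * α (1 ⊗ₜ 1)) * hlam1
  rw [hβ1, mul_inv, inv_eq_of_mul_eq_one_right hlam1]

end Bialgebra

lemma conv_algebraMap_id_comp_twMul (φ : H →ₗ[k] k) (α : H ⊗[k] H →ₗ[k] k) :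
    conv k (Algebra.linearMap k H ∘ₗ φ) LinearMap.id ∘ₗ twMul k α
      = twMul k (conv k α (φ ∘ₗ LinearMap.mul' k H)) := by
  rw [twMul, twMul, comp_conv_algebraMap_comp, conv_comp_mul', LinearMap.id_comp,
    LinearMap.comp_assoc, ← conv_assoc, algebraMap_comp_conv]

lemma twMul_comp_map_conv_algebraMap_id (φ : H →ₗ[k] k) (γ : H ⊗[k] H →ₗ[k] k) :
    twMul k γ ∘ₗ TensorProduct.map (conv k (Algebra.linearMap k H ∘ₗ φ) LinearMap.id)
        (conv k (Algebra.linearMap k H ∘ₗ φ) LinearMap.id)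
      = twMul k (conv k (LinearMap.mul' k k ∘ₗ TensorProduct.map φ φ) γ) := by
  rw [map_conv_algebraMap_comp, TensorProduct.map_id, ← LinearMap.id_comp (twMul k γ),
    comp_conv_algebraMap_comp, twMul, LinearMap.id_comp, LinearMap.comp_id, ← conv_assoc,
    ← algebraMap_comp_conv, twMul]

theorem twisted_comodule_algebra_iso_of_cohomologous
    (α β : H ⊗[k] H →ₗ[k] k) (lam lamInv : H →ₗ[k] k)
    (hlam : conv k lam lamInv = convOne k) (hlam' : conv k lamInv lam = convOne k)
    (hcohom : β = conv k
        (conv k (LinearMap.mul' k k ∘ₗ TensorProduct.map lam lam) α)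
        (lamInv ∘ₗ LinearMap.mul' k H)) :
    -- the map `f : x ↦ λ⁻¹(x₁) x₂`
    letI f : H →ₗ[k] H := conv k (Algebra.linearMap k H ∘ₗ lamInv) LinearMap.id
    Function.Bijective f ∧
    -- `f` is multiplicative for the twisted products
    (∀ x y : H, f (twMul k α (x ⊗ₜ[k] y)) = twMul k β (f x ⊗ₜ[k] f y)) ∧
    -- `f` sends the unit of `ᵅH` to the unit of `ᵝH`
    f (((α (1 ⊗ₜ[k] 1))⁻¹ : k) • (1 : H)) = ((β (1 ⊗ₜ[k] 1))⁻¹ : k) • (1 : H) ∧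
    -- `f` is a morphism of right `H`-comodules (the coaction being `Δ`)
    Coalgebra.comul (R := k) ∘ₗ f = TensorProduct.map f LinearMap.id ∘ₗ Coalgebra.comul := by
  refine ⟨conv_algebraMap_id_bijective k hlam' hlam, fun x y => ?_, ?_,
    comul_comp_conv_algebraMap_id k lamInv⟩
  · have htwist := conv_mul'_map_eq_of_eq_conv k hlam' α β _ hcohom
    rw [← TensorProduct.map_tmul, ← LinearMap.comp_apply (twMul k β),
      twMul_comp_map_conv_algebraMap_id, htwist, ← conv_algebraMap_id_comp_twMul]
    rfl
  · rw [map_smul, conv_apply_one, inv_apply_one_tmul_one_of_eq_conv k hlam α β hcohom]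
    simp [Algebra.algebraMap_eq_smul_one, smul_smul, mul_comm]
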